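/- arXiv:1109.2265 — 6 statements merged into one kernel-verified Lean document; each statement's English description precedes it below -/
import Mathlib

section
/- Let f := T^{k+d} + f_{d−1}T^{k+d−1} + ⋯ + f_0T^k ∈ 𝔽_q[T] with 1 ≤ d and k+d ≤ q−2. If there exists a point x = (x_1,…,x_{k+1}) ∈ (𝔽_q^*)^{k+1} with pairwise-distinct coordinates such that H_f(x) = 0, then there exists g ∈ 𝔽_q[T] with deg g ≤ k−1 such that the Hamming distance between the words (f(x))_{x∈𝔽_q^*} and (g(x))_{x∈𝔽_q^*} is at most q−k−2; in particular, the word generated by f is not a deep hole of the standard Reed–Solomon code of dimension k over 𝔽_q. -/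
/-- `Q := (T - X_1) ⋯ (T - X_{k+1})` as a polynomial in `T` over `𝔽_q[X_1, …, X_{k+1}]`. -/
noncomputable def Qpoly (F : Type*) [Field F] (k : ℕ) :
    Polynomial (MvPolynomial (Fin (k + 1)) F) :=
  ∏ i : Fin (k + 1), (Polynomial.X - Polynomial.C (MvPolynomial.X i))

/-- The coefficient of `T^k` in the remainder of `f` upon division by the monic
polynomial `Q`.  For `f = T^{k+j}` this is the polynomial `H_j`. -/
noncomputable def Hcoef (F : Type*) [Field F] (k : ℕ) (f : Polynomial F) :
    MvPolynomial (Fin (k + 1)) F :=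
  ((f.map MvPolynomial.C) %ₘ Qpoly F k).coeff k


/-- The polynomial `f = T^{k+d} + f_{d-1} T^{k+d-1} + ⋯ + f_0 T^k` with coefficients
`fc i = f_i`. -/
noncomputable def fpoly (F : Type*) [Field F] (k d : ℕ) (fc : Fin d → F) : Polynomial F :=
  Polynomial.X ^ (k + d) + ∑ i : Fin d, Polynomial.C (fc i) * Polynomial.X ^ (k + i.val)

theorem stmt1 {F : Type*} [Field F] [Fintype F] [DecidableEq F]
    (q : ℕ) (hq : Fintype.card F = q)
    (k d : ℕ) (hd : 1 ≤ d) (hdk : d < k) (hkd : k + d ≤ q - 2)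
    (fc : Fin d → F)
    (x : Fin (k + 1) → F) (hx0 : ∀ i, x i ≠ 0) (hxinj : Function.Injective x)
    (hHf : MvPolynomial.eval x (Hcoef F k (fpoly F k d fc)) = 0) :
    ∃ g : Polynomial F, g.degree < k ∧
      hammingDist (fun u : Fˣ => (fpoly F k d fc).eval (u : F))
        (fun u : Fˣ => g.eval (u : F)) ≤ q - k - 2 := by
  classical
  set f := fpoly F k d fc with hf
  set q' : Polynomial F := ∏ i : Fin (k+1), (Polynomial.X - Polynomial.C (x i)) with hq'
  have hq'monic : q'.Monic :=
    Polynomial.monic_prod_of_monic _ _ fun i _ => Polynomial.monic_X_sub_C _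
  have hq'deg : q'.degree = ((k+1 : ℕ) : WithBot ℕ) := by
    rw [hq', Polynomial.degree_prod]
    simp [Polynomial.degree_X_sub_C]
  set r := f %ₘ q' with hrdef
  -- relate r to Hcoef via mapping
  have hQmonic : (Qpoly F k).Monic :=
    Polynomial.monic_prod_of_monic _ _ fun i _ => Polynomial.monic_X_sub_C _
  have hmap : (f.map MvPolynomial.C %ₘ Qpoly F k).map (MvPolynomial.eval x) = r := by
    rw [Polynomial.map_modByMonic _ hQmonic, Polynomial.map_map]
    congr 1
    · have : (MvPolynomial.eval x).comp (MvPolynomial.C (σ := Fin (k+1))) = RingHom.id F := by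
        ext a; simp
      rw [this, Polynomial.map_id]
    · rw [Qpoly, Polynomial.map_prod]
      simp [hq']
  have hcoeffk : r.coeff k = 0 := by
    rw [← hmap, Polynomial.coeff_map]
    exact hHf
  have hrdeg : r.degree < ((k+1 : ℕ) : WithBot ℕ) := by
    rw [← hq'deg]
    exact Polynomial.degree_modByMonic_lt f hq'monic
  have hrdegk : r.degree < (k : WithBot ℕ) := by
    rw [Polynomial.degree_lt_iff_coeff_zero]
    intro m hm
    rcases eq_or_lt_of_le hm with h | h
    · rwa [← h]
    · refine Polynomial.coeff_eq_zero_of_degree_lt (lt_of_lt_of_le hrdeg ?_)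
      exact_mod_cast Nat.cast_le.mpr h
  -- agreement on the points x i
  have hagree : ∀ i : Fin (k+1), f.eval (x i) = r.eval (x i) := by
    intro i
    have hfe : r + q' * (f /ₘ q') = f := Polynomial.modByMonic_add_div f q'
    have hq0 : q'.eval (x i) = 0 := by
      rw [hq', Polynomial.eval_prod]
      exact Finset.prod_eq_zero (Finset.mem_univ i) (by simp)
    rw [← hfe]
    simp [hq0]
  refine ⟨r, hrdegk, ?_⟩
  -- hamming distance bound
  set u : Fin (k+1) → Fˣ := fun i => Units.mk0 (x i) (hx0 i) with hu
  have huinj : Function.Injective u := by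
    intro i j hij
    apply hxinj
    have := congrArg (fun v : Fˣ => (v : F)) hij
    simpa [hu] using this
  have hdisj : ({i : Fˣ | f.eval (i : F) ≠ r.eval (i : F)} : Finset Fˣ)
      ⊆ Finset.univ \ Finset.image u Finset.univ := by
    intro v hv
    simp only [Finset.mem_filter, Finset.mem_sdiff, Finset.mem_univ, true_and,
      Finset.mem_image] at hv ⊢
    rintro ⟨i, -, rfl⟩
    exact hv (by simpa [hu] using hagree i)
  have hcard : hammingDist (fun v : Fˣ => f.eval (v : F)) (fun v : Fˣ => r.eval (v : F))
      ≤ Fintype.card Fˣ - (k+1) := by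
    have := Finset.card_le_card hdisj
    rwa [Finset.card_sdiff_of_subset (Finset.subset_univ _), Finset.card_image_of_injective _ huinj,
      Finset.card_univ, Finset.card_fin] at this
  have hcU : Fintype.card Fˣ = q - 1 := by
    rw [Fintype.card_units, hq]
  refine le_trans hcard ?_
  omega
end

section
/- Let d < k be positive integers and let G ∈ 𝔽_q[Y_1,…,Y_d] be a polynomial whose gradient ∇G = (∂G/∂Y_1,…,∂G/∂Y_d) does not vanish at any point of K^d. Let H := G(Π_1,…,Π_d) ∈ 𝔽_q[X_1,…,X_{k+1}]. Then every point x = (x_1,…,x_{k+1}) ∈ K^{k+1} with H(x) = 0 and (∂H/∂X_i)(x) = 0 for all 1 ≤ i ≤ k+1 has at most d−1 pairwise-distinct coordinates, i.e., the set {x_1,…,x_{k+1}} has cardinality at most d−1. In particular, the singular locus of the hypersurface {H = 0} ⊆ K^{k+1} is contained in a finite union of linear subspaces of K^{k+1} of dimension d−1. -/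
open MvPolynomial

private lemma mesymm_zero' {K : Type*} [CommRing K] (M : Multiset K) : M.esymm 0 = 1 := by
  simp [Multiset.esymm]

private lemma mesymm_cons {K : Type*} [CommRing K] (a : K) (M : Multiset K) (n : ℕ) :
    (a ::ₘ M).esymm (n + 1) = M.esymm (n + 1) + a * M.esymm n := by
  simp only [Multiset.esymm, Multiset.powersetCard_cons, Multiset.map_add, Multiset.sum_add,
    Multiset.map_map, Function.comp_def, Multiset.prod_cons]
  rw [Multiset.sum_map_mul_left]

private lemma mesymm_expand {K : Type*} [CommRing K] (a : K) (M : Multiset K) :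
    ∀ m : ℕ, M.esymm m =
      ∑ s ∈ Finset.range (m + 1), (-1 : K) ^ s * a ^ s * (a ::ₘ M).esymm (m - s)
  | 0 => by simp [mesymm_zero']
  | (m + 1) => by
    have h1 := mesymm_cons a M m
    have IH := mesymm_expand a M m
    have h2 : ∑ s ∈ Finset.range (m + 1),
        (-1 : K) ^ (s + 1) * a ^ (s + 1) * (a ::ₘ M).esymm (m - s) = -a * M.esymm m := by
      rw [IH, Finset.mul_sum]
      exact Finset.sum_congr rfl fun s _ => by ring
    rw [Finset.sum_range_succ']
    simp only [Nat.succ_sub_succ, Nat.sub_zero, pow_zero, one_mul]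
    rw [h2]
    linear_combination -h1

private lemma chain_rule {F K : Type*} [CommSemiring F] [CommSemiring K] [Algebra F K]
    {n m : ℕ} (f : Fin n → MvPolynomial (Fin m) F) (z : Fin m → K) (i : Fin m)
    (G : MvPolynomial (Fin n) F) :
    MvPolynomial.aeval z (MvPolynomial.pderiv i (MvPolynomial.aeval f G)) =
      ∑ j : Fin n, MvPolynomial.aeval (fun l => MvPolynomial.aeval z (f l))
          (MvPolynomial.pderiv j G) * MvPolynomial.aeval z (MvPolynomial.pderiv i (f j)) := by
  induction G using MvPolynomial.induction_on with
  | C a => simp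
  | add p q hp hq => simp only [map_add, hp, hq, add_mul, ← Finset.sum_add_distrib]
  | mul_X p j hp =>
    set y : Fin n → K := fun l => MvPolynomial.aeval z (f l) with hy
    have key : MvPolynomial.aeval z (MvPolynomial.aeval f p) = MvPolynomial.aeval y p :=
      comp_aeval_apply _ _ _
    have hterm : ∀ j' : Fin n,
        MvPolynomial.aeval y (MvPolynomial.pderiv j' (p * X j)) *
          MvPolynomial.aeval z (MvPolynomial.pderiv i (f j'))
        = MvPolynomial.aeval y (MvPolynomial.pderiv j' p) *
            MvPolynomial.aeval z (MvPolynomial.pderiv i (f j')) * y j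
          + (if j' = j then MvPolynomial.aeval y p *
              MvPolynomial.aeval z (MvPolynomial.pderiv i (f j)) else 0) := by
      intro j'
      rw [pderiv_mul, map_add, map_mul, aeval_X]
      by_cases h : j' = j
      · subst h; rw [pderiv_X_self]
        simp only [map_one, mul_one, ite_true, eq_self_iff_true, if_true]
        ring
      · rw [pderiv_X_of_ne (Ne.symm h)]
        simp only [map_zero, mul_zero, add_zero, if_neg h]
        ring
    rw [map_mul, pderiv_mul, map_add, map_mul, map_mul, hp, key]
    simp only [hterm, Finset.sum_add_distrib, Finset.sum_ite_eq', Finset.mem_univ, ite_true,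
      if_true, Finset.sum_mul, aeval_X, hy]
    simp only [← hy, hterm, Finset.sum_add_distrib, Finset.sum_ite_eq', Finset.mem_univ, ite_true,
      Finset.sum_mul]
    rfl

private lemma pderiv_prod_X_eq_zero {σ R : Type*} [CommSemiring R] [DecidableEq σ] (i : σ)
    (t : Finset σ) (h : i ∉ t) :
    MvPolynomial.pderiv i (∏ j ∈ t, (X j : MvPolynomial σ R)) = 0 := by
  induction t using Finset.induction_on with
  | empty => simp
  | @insert a s ha ih =>
    rw [Finset.mem_insert, not_or] at h
    rw [Finset.prod_insert ha, pderiv_mul, ih h.2, pderiv_X_of_ne (Ne.symm h.1)]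
    simp

private lemma pderiv_esymm' {R : Type*} [CommSemiring R] {k : ℕ} (i : Fin (k + 1)) (n : ℕ) :
    MvPolynomial.pderiv i (esymm (Fin (k + 1)) R (n + 1)) =
      ∑ t ∈ (Finset.univ.erase i).powersetCard n, ∏ j ∈ t, (X j : MvPolynomial (Fin (k + 1)) R) := by
  classical
  have hu : (Finset.univ : Finset (Fin (k + 1))) = insert i (Finset.univ.erase i) :=
    (Finset.insert_erase (Finset.mem_univ i)).symm
  have hdisj : Disjoint ((Finset.univ.erase i).powersetCard (n + 1))
      (((Finset.univ.erase i).powersetCard n).image (insert i)) := by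
    rw [Finset.disjoint_left]
    intro t ht ht'
    obtain ⟨t', ht', rfl⟩ := Finset.mem_image.mp ht'
    have : i ∈ insert i t' := Finset.mem_insert_self i t'
    exact Finset.notMem_erase i _ ((Finset.mem_powersetCard.mp ht).1 this)
  have hps : Finset.powersetCard (n + 1) (Finset.univ : Finset (Fin (k + 1)))
      = (Finset.univ.erase i).powersetCard (n + 1) ∪
        ((Finset.univ.erase i).powersetCard n).image (insert i) := by
    conv_lhs => rw [hu]
    rw [Finset.powersetCard_succ_insert (Finset.notMem_erase i _)]
  rw [esymm, hps, Finset.sum_union hdisj, map_add]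
  have h1 : MvPolynomial.pderiv i (∑ t ∈ (Finset.univ.erase i).powersetCard (n + 1),
      ∏ j ∈ t, (X j : MvPolynomial (Fin (k + 1)) R)) = 0 := by
    rw [map_sum]
    refine Finset.sum_eq_zero fun t ht => pderiv_prod_X_eq_zero i t fun hit =>
      Finset.notMem_erase i _ ((Finset.mem_powersetCard.mp ht).1 hit)
  have hinj : ∀ t ∈ (Finset.univ.erase i).powersetCard n,
      ∀ t' ∈ (Finset.univ.erase i).powersetCard n, insert i t = insert i t' → t = t' := by
    intro t ht t' ht' he
    have hit : i ∉ t := fun hit => Finset.notMem_erase i _ ((Finset.mem_powersetCard.mp ht).1 hit)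
    have hit' : i ∉ t' :=
      fun hit => Finset.notMem_erase i _ ((Finset.mem_powersetCard.mp ht').1 hit)
    rw [← Finset.erase_insert hit, he, Finset.erase_insert hit']
  rw [h1, zero_add, Finset.sum_image hinj, map_sum]
  refine Finset.sum_congr rfl fun t ht => ?_
  have hit : i ∉ t := fun hit => Finset.notMem_erase i _ ((Finset.mem_powersetCard.mp ht).1 hit)
  rw [Finset.prod_insert hit, pderiv_mul, pderiv_X_self, pderiv_prod_X_eq_zero i t hit]
  simp

open scoped Classical in
theorem stmt7 {F : Type*} [Field F] (k d : ℕ) (hd : 1 ≤ d) (hdk : d < k)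
    (G : MvPolynomial (Fin d) F)
    (hG : ∀ y : Fin d → AlgebraicClosure F,
      ∃ i : Fin d, MvPolynomial.aeval y (MvPolynomial.pderiv i G) ≠ 0)
    (H : MvPolynomial (Fin (k + 1)) F)
    (hH : H = MvPolynomial.aeval
        (fun i : Fin d => MvPolynomial.esymm (Fin (k + 1)) F (i.val + 1)) G)
    (x : Fin (k + 1) → AlgebraicClosure F)
    (hx0 : MvPolynomial.aeval x H = 0)
    (hx1 : ∀ i : Fin (k + 1), MvPolynomial.aeval x (MvPolynomial.pderiv i H) = 0) :
    (Finset.univ.image x).card ≤ d - 1 := by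
  set y : Fin d → AlgebraicClosure F := fun l =>
    MvPolynomial.aeval x (esymm (Fin (k + 1)) F (l.val + 1)) with hy
  set c : Fin d → AlgebraicClosure F := fun j => MvPolynomial.aeval y (MvPolynomial.pderiv j G) with hc
  set N : Multiset (AlgebraicClosure F) := Multiset.map x Finset.univ.val with hN
  set M : Fin (k + 1) → Multiset (AlgebraicClosure F) :=
    fun i => Multiset.map x (Finset.univ.erase i).val with hM
  -- N = x i ::ₘ M i
  have hNM : ∀ i, N = x i ::ₘ M i := by
    intro i
    have h1 : (Finset.univ : Finset (Fin (k + 1))).val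
        = i ::ₘ (Finset.univ.erase i).val := by
      rw [Finset.erase_val]
      exact (Multiset.cons_erase (Finset.mem_val.mpr (Finset.mem_univ i))).symm
    rw [hN, h1, Multiset.map_cons]
  -- evaluated derivative of esymm
  have hde : ∀ (i : Fin (k + 1)) (n : ℕ),
      MvPolynomial.aeval x (MvPolynomial.pderiv i (esymm (Fin (k + 1)) F (n + 1)))
        = (M i).esymm n := by
    intro i n
    rw [pderiv_esymm', map_sum]
    rw [hM]
    rw [Finset.esymm_map_val]
    exact Finset.sum_congr rfl fun t _ => by rw [aeval_prod]; simp
  -- main equations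
  have heq : ∀ i : Fin (k + 1), ∑ j : Fin d, c j * (M i).esymm j.val = 0 := by
    intro i
    have := hx1 i
    rw [hH, chain_rule] at this
    rw [← this]
    refine Finset.sum_congr rfl fun j _ => ?_
    rw [hde i j.val]
  -- the univariate polynomial
  set Rp : Polynomial (AlgebraicClosure F) := ∑ j : Fin d, Polynomial.C (c j) *
    ∑ s ∈ Finset.range (j.val + 1),
      Polynomial.C ((-1 : AlgebraicClosure F) ^ s * N.esymm (j.val - s)) * Polynomial.X ^ s with hRp
  have heval : ∀ i : Fin (k + 1), Rp.eval (x i) = 0 := by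
    intro i
    rw [hRp]
    rw [Polynomial.eval_finset_sum]
    rw [← heq i]
    refine Finset.sum_congr rfl fun j _ => ?_
    rw [Polynomial.eval_mul, Polynomial.eval_C, Polynomial.eval_finset_sum]
    congr 1
    rw [mesymm_expand (x i) (M i) j.val, ← hNM i]
    refine Finset.sum_congr rfl fun s _ => ?_
    rw [Polynomial.eval_mul, Polynomial.eval_C, Polynomial.eval_pow, Polynomial.eval_X]
    ring
  -- choose maximal nonzero coefficient
  obtain ⟨j₀, hj₀⟩ := hG y
  have hj₀' : j₀ ∈ Finset.univ.filter (fun j => c j ≠ 0) := by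
    simp [hc, hj₀]
  set T := Finset.univ.filter (fun j => c j ≠ 0) with hT
  have hTne : T.Nonempty := ⟨j₀, hj₀'⟩
  set m := T.max' hTne with hm
  have hcm : c m ≠ 0 := (Finset.mem_filter.mp (T.max'_mem hTne)).2
  have hmax : ∀ j : Fin d, m < j → c j = 0 := by
    intro j hj
    by_contra hcj
    exact absurd (T.le_max' j (Finset.mem_filter.mpr ⟨Finset.mem_univ j, hcj⟩))
      (not_le.mpr hj)
  -- the coefficient of Rp at m is nonzero
  have hcoeff : Rp.coeff m.val = c m * (-1 : AlgebraicClosure F) ^ m.val := by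
    rw [hRp, Polynomial.finset_sum_coeff]
    rw [Finset.sum_eq_single m]
    · rw [Polynomial.coeff_C_mul, Polynomial.finset_sum_coeff]
      simp only [Polynomial.coeff_C_mul, Polynomial.coeff_X_pow, mul_ite, mul_one, mul_zero]
      rw [Finset.sum_ite_eq (Finset.range (m.val + 1)) m.val]
      simp [mesymm_zero']
    · intro j _ hj
      rcases lt_or_gt_of_ne hj with h | h
      · -- j < m : coefficient of inner at m.val is 0
        rw [Polynomial.coeff_C_mul, Polynomial.finset_sum_coeff]
        simp only [Polynomial.coeff_C_mul, Polynomial.coeff_X_pow, mul_ite, mul_one, mul_zero]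
        rw [Finset.sum_ite_eq (Finset.range (j.val + 1)) m.val]
        have : ¬ m.val ∈ Finset.range (j.val + 1) := by
          simp only [Finset.mem_range, not_lt]
          exact Nat.succ_le_of_lt h
        rw [if_neg this, mul_zero]
      · rw [hmax j h, map_zero, zero_mul, Polynomial.coeff_zero]
    · intro h
      exact absurd (Finset.mem_univ m) h
  have hR0 : Rp ≠ 0 := by
    intro h
    apply hcm
    have := hcoeff
    rw [h, Polynomial.coeff_zero] at this
    rcases mul_eq_zero.mp this.symm with h' | h'
    · exact h'
    · exact absurd h' (pow_ne_zero _ (neg_ne_zero.mpr one_ne_zero))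
  have hdeg : Rp.natDegree ≤ d - 1 := by
    rw [hRp]
    refine Polynomial.natDegree_sum_le_of_forall_le _ _ fun j _ => ?_
    refine le_trans (Polynomial.natDegree_C_mul_le _ _) ?_
    refine Polynomial.natDegree_sum_le_of_forall_le _ _ fun s hs => ?_
    refine le_trans (Polynomial.natDegree_C_mul_X_pow_le _ _) ?_
    have hs' : s ≤ j.val := Nat.lt_succ_iff.mp (Finset.mem_range.mp hs)
    exact le_trans hs' (Nat.le_sub_one_of_lt j.isLt)
  have hsub : (Finset.univ.image x) ⊆ Rp.roots.toFinset := by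
    intro v hv
    obtain ⟨i, _, rfl⟩ := Finset.mem_image.mp hv
    rw [Multiset.mem_toFinset, Polynomial.mem_roots hR0]
    exact heval i
  calc (Finset.univ.image x).card ≤ Rp.roots.toFinset.card := Finset.card_le_card hsub
    _ ≤ Multiset.card Rp.roots := Rp.roots.toFinset_card_le
    _ ≤ Rp.natDegree := Rp.card_roots'
    _ ≤ d - 1 := hdeg
end

section
/- Let f := T^{k+d} + f_{d−1}T^{k+d−1} + ⋯ + f_0T^k ∈ 𝔽_q[T] with 1 ≤ d < k, and let V_f ⊆ K^{k+1} be the hypersurface defined by H_f. Then every singular point x = (x_1,…,x_{k+1}) ∈ K^{k+1} of V_f (i.e., every x with H_f(x) = 0 and (∂H_f/∂X_i)(x) = 0 for all 1 ≤ i ≤ k+1) has at most d−1 pairwise-distinct coordinates; consequently the singular locus of V_f is contained in a finite union of linear subspaces of K^{k+1} of dimension d−1. -/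
open Polynomial TrivSqZeroExt


lemma aeval_dualNumber {F K : Type*} [CommRing F] [CommRing K] [Algebra F K] {n : ℕ}
    (x : Fin n → K) (i : Fin n) (P : MvPolynomial (Fin n) F) :
    MvPolynomial.aeval (fun j => (inl (x j) + if j = i then DualNumber.eps else 0 : DualNumber K)) P
      = inl (MvPolynomial.aeval x P) + inr (MvPolynomial.aeval x (MvPolynomial.pderiv i P)) := by
  induction P using MvPolynomial.induction_on with
  | C a =>
      simp [algebraMap_eq_inl']
  | add p q hp hq =>
      simp only [map_add, hp, hq, inl_add, inr_add]
      abel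
  | mul_X p j hp =>
      simp only [map_mul, hp, MvPolynomial.aeval_X, map_add, Derivation.leibniz,
        MvPolynomial.pderiv_X, smul_eq_mul]
      refine TrivSqZeroExt.ext ?_ ?_ <;>
        simp [fst_mul, DualNumber.snd_mul, fst_add, snd_add, DualNumber.fst_eps,
          DualNumber.snd_eps, Pi.single_apply, apply_ite, eq_comm (a := j) (b := i)] <;>
        split <;> simp <;> ring



lemma Hcoef_aeval {F : Type*} [Field F] {A : Type*} [CommRing A] [Algebra F A] (k : ℕ)
    (f : Polynomial F) (z : Fin (k + 1) → A) :
    MvPolynomial.aeval z (Hcoef F k f)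
      = ((f.map (algebraMap F A)) %ₘ ∏ j, (X - C (z j))).coeff k := by
  classical
  have hQm : (Qpoly F k).Monic :=
    monic_prod_of_monic _ _ fun i _ => monic_X_sub_C _
  have key : ((f.map MvPolynomial.C %ₘ Qpoly F k).map
      (MvPolynomial.aeval z : MvPolynomial (Fin (k+1)) F →ₐ[F] A).toRingHom)
      = (f.map (algebraMap F A)) %ₘ ∏ j, (X - C (z j)) := by
    rw [Polynomial.map_modByMonic _ hQm]
    congr 1
    · rw [Polynomial.map_map]
      congr 1
      ext a
      simp
    · unfold Qpoly
      rw [Polynomial.map_prod]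
      simp
  calc MvPolynomial.aeval z (Hcoef F k f)
      = ((f.map MvPolynomial.C %ₘ Qpoly F k).map
          (MvPolynomial.aeval z : MvPolynomial (Fin (k+1)) F →ₐ[F] A).toRingHom).coeff k := by
        rw [Polynomial.coeff_map]; rfl
    _ = _ := by rw [key]


lemma fpoly_monic (F : Type*) [Field F] (k d : ℕ) (fc : Fin d → F) :
    (fpoly F k d fc).Monic ∧ (fpoly F k d fc).natDegree = k + d := by
  have hs : (∑ i : Fin d, Polynomial.C (fc i) * Polynomial.X ^ (k + i.val)).degree
      < ((k + d : ℕ) : WithBot ℕ) := by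
    refine lt_of_le_of_lt (degree_sum_le _ _) ?_
    rw [Finset.sup_lt_iff (by exact_mod_cast WithBot.bot_lt_coe _)]
    intro i _
    refine lt_of_le_of_lt (degree_C_mul_X_pow_le _ _) ?_
    exact_mod_cast Nat.add_lt_add_left i.isLt k
  rw [← degree_X_pow (R := F) (k + d)] at hs
  constructor
  · exact (monic_X_pow _).add_of_left hs
  · have hdeg : (fpoly F k d fc).degree = ((k + d : ℕ) : WithBot ℕ) := by
      unfold fpoly
      rw [degree_add_eq_left_of_degree_lt hs, degree_X_pow]
    exact natDegree_eq_of_degree_eq_some hdeg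


open scoped Classical in
theorem stmt8 {F : Type*} [Field F] (k d : ℕ) (hd : 1 ≤ d) (hdk : d < k)
    (fc : Fin d → F)
    (x : Fin (k + 1) → AlgebraicClosure F)
    (hx0 : MvPolynomial.aeval x (Hcoef F k (fpoly F k d fc)) = 0)
    (hx1 : ∀ i : Fin (k + 1),
      MvPolynomial.aeval x (MvPolynomial.pderiv i (Hcoef F k (fpoly F k d fc))) = 0) :
    (Finset.univ.image x).card ≤ d - 1 := by
  set fK := (fpoly F k d fc).map (algebraMap F (AlgebraicClosure F)) with hfK
  set Qx : (AlgebraicClosure F)[X] := ∏ j, (X - C (x j)) with hQxdef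
  have hQx : Qx.Monic := monic_prod_of_monic _ _ fun i _ => monic_X_sub_C _
  have hQxdeg : Qx.natDegree = k + 1 := by
    rw [hQxdef, natDegree_prod_of_monic _ _ fun i _ => monic_X_sub_C _]
    simp
  obtain ⟨hfm, hfdeg⟩ := fpoly_monic F k d fc
  have hfKm : fK.Monic := hfm.map _
  have hfKdeg : fK.natDegree = k + d := by rw [hfK, hfm.natDegree_map, hfdeg]
  set a := fK /ₘ Qx with ha
  have ha0 : a ≠ 0 := by
    rw [ha, Ne, divByMonic_eq_zero_iff hQx, degree_eq_natDegree hfKm.ne_zero,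
      degree_eq_natDegree hQx.ne_zero, hfKdeg, hQxdeg, Nat.cast_lt]
    omega
  have hadeg : a.natDegree = d - 1 := by
    rw [ha, natDegree_divByMonic _ hQx, hfKdeg, hQxdeg]
    omega
  have key : ∀ i, a.eval (x i) = 0 := by
    intro i
    set A := DualNumber (AlgebraicClosure F) with hA
    set z : Fin (k + 1) → A := fun j => inl (x j) + if j = i then DualNumber.eps else 0 with hz
    have hzero : MvPolynomial.aeval z (Hcoef F k (fpoly F k d fc)) = 0 := by
      rw [aeval_dualNumber, hx0, hx1 i, inl_zero, inr_zero, add_zero]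
    rw [Hcoef_aeval] at hzero
    set ι : AlgebraicClosure F →+* A := algebraMap _ A with hι
    have hmapf : (fpoly F k d fc).map (algebraMap F A) = fK.map ι := by
      rw [hfK, Polynomial.map_map]; rfl
    set π := ∏ j ∈ Finset.univ.erase i, (X - C (x j)) with hπdef
    have hπm : π.Monic := monic_prod_of_monic _ _ fun j _ => monic_X_sub_C _
    have hπdeg : π.natDegree = k := by
      rw [hπdef, natDegree_prod_of_monic _ _ fun j _ => monic_X_sub_C _]
      simp [Finset.card_erase_of_mem]
    have hπx : Qx = (X - C (x i)) * π := (Finset.mul_prod_erase _ _ (Finset.mem_univ i)).symm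
    set α := a.eval (x i) with hα
    obtain ⟨b, hb⟩ : (X - C (x i)) ∣ (a - C α) := X_sub_C_dvd_sub_C_eval
    set r := fK %ₘ Qx with hr
    have h1 : r + Qx * a = fK := modByMonic_add_div fK Qx
    set Qz : Polynomial A := ∏ j, (X - C (z j)) with hQzdef
    have hQzm : Qz.Monic := monic_prod_of_monic _ _ fun j _ => monic_X_sub_C _
    have hQzdeg : Qz.natDegree = k + 1 := by
      rw [hQzdef, natDegree_prod_of_monic _ _ fun j _ => monic_X_sub_C _]
      simp
    have hπAprod : π.map ι = ∏ j ∈ Finset.univ.erase i, (X - C (ι (x j))) := by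
      rw [hπdef, Polynomial.map_prod]
      simp
    have hQz : Qz = Qx.map ι - C DualNumber.eps * π.map ι := by
      rw [hQzdef, ← Finset.mul_prod_erase _ _ (Finset.mem_univ i), hπx,
        Polynomial.map_mul, hπAprod]
      have h2 : ∀ j ∈ Finset.univ.erase i, (X - C (z j) : Polynomial A)
          = (X - C (ι (x j))) := by
        intro j hj
        have hji : j ≠ i := (Finset.mem_erase.mp hj).1
        have hzj : z j = ι (x j) := by
          simp only [hz, if_neg hji, add_zero]
          rfl
        rw [hzj]
      rw [Finset.prod_congr rfl h2]
      have h3 : (X - C (z i) : Polynomial A) = (X - C (ι (x i))) - C DualNumber.eps := by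
        have hzi : z i = ι (x i) + DualNumber.eps := by
          simp only [hz, if_pos rfl]
          rfl
        rw [hzi, C_add]
        ring
      rw [h3]
      have h4 : Polynomial.map ι (X - C (x i)) = X - C (ι (x i)) := by simp
      rw [h4]
      ring
    have he2 : (C DualNumber.eps : Polynomial A) * C DualNumber.eps = 0 := by
      rw [← C_mul, DualNumber.eps_mul_eps, map_zero]
    have h1A : r.map ι + Qx.map ι * a.map ι = fK.map ι := by
      rw [← h1]; simp [Polynomial.map_add, Polynomial.map_mul]
    have hπA : Qx.map ι = (X - C (ι (x i))) * π.map ι := by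
      rw [hπx]
      simp [Polynomial.map_mul]
    have hbA : a.map ι - C (ι α) = (X - C (ι (x i))) * b.map ι := by
      have h5 := congrArg (Polynomial.map ι) hb
      simp only [Polynomial.map_sub, Polynomial.map_mul, Polynomial.map_C,
        Polynomial.map_X] at h5
      exact h5
    have heq : (r.map ι + C DualNumber.eps * (C (ι α) * π.map ι))
        + Qz * (a.map ι + C DualNumber.eps * b.map ι) = fK.map ι := by
      linear_combination h1A + (a.map ι + C DualNumber.eps * b.map ι) * hQz
        + (C DualNumber.eps * b.map ι) * hπA - (C DualNumber.eps * π.map ι) * hbA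
        - (π.map ι * b.map ι) * he2
    have hdegr : (r.map ι + C DualNumber.eps * (C (ι α) * π.map ι)).degree < Qz.degree := by
      have hQzd : Qz.degree = ((k + 1 : ℕ) : WithBot ℕ) := by
        rw [degree_eq_natDegree hQzm.ne_zero, hQzdeg]
      rw [hQzd]
      refine lt_of_le_of_lt (degree_add_le _ _) (max_lt ?_ ?_)
      · refine lt_of_le_of_lt (degree_map_le) ?_
        calc r.degree < Qx.degree := degree_modByMonic_lt _ hQx
          _ = ((k + 1 : ℕ) : WithBot ℕ) := by rw [degree_eq_natDegree hQx.ne_zero, hQxdeg]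
      · calc (C DualNumber.eps * (C (ι α) * π.map ι)).degree
            ≤ 0 + (0 + (π.map ι).degree) :=
              le_trans (degree_mul_le _ _) (add_le_add degree_C_le
                (le_trans (degree_mul_le _ _) (add_le_add degree_C_le le_rfl)))
          _ ≤ π.degree := by simpa using degree_map_le (f := ι) (p := π)
          _ < _ := by
              rw [degree_eq_natDegree hπm.ne_zero, hπdeg]
              exact_mod_cast Nat.lt_succ_self k
    have hrem : fK.map ι %ₘ Qz = r.map ι + C DualNumber.eps * (C (ι α) * π.map ι) :=
      (div_modByMonic_unique _ _ hQzm ⟨heq, hdegr⟩).2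
    rw [hmapf, hrem] at hzero
    have hπcoeff : (π.map ι).coeff k = 1 := by
      have hm2 : (π.map ι).Monic := hπm.map ι
      have hd2 : (π.map ι).natDegree = k := by rw [hπm.natDegree_map, hπdeg]
      rw [← hd2]
      exact hm2.coeff_natDegree
    rw [coeff_add, coeff_C_mul, coeff_C_mul, hπcoeff, mul_one, Polynomial.coeff_map] at hzero
    have hinl : ∀ c : AlgebraicClosure F, ι c = inl c := fun c => rfl
    rw [hinl, hinl] at hzero
    have hsnd := congrArg TrivSqZeroExt.snd hzero
    rw [TrivSqZeroExt.snd_add, TrivSqZeroExt.snd_inl, DualNumber.snd_mul,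
      TrivSqZeroExt.snd_inl, TrivSqZeroExt.fst_inl, DualNumber.snd_eps, mul_zero,
      one_mul, zero_add, zero_add] at hsnd
    exact hsnd
  have hsub : (Finset.univ.image x).val ⊆ a.roots := by
    intro y hy
    obtain ⟨i, _, rfl⟩ := Finset.mem_image.mp (Finset.mem_val.mp hy)
    rw [mem_roots ha0]
    exact key i
  calc (Finset.univ.image x).card ≤ a.natDegree := card_le_degree_of_subset_roots hsub
    _ = d - 1 := hadeg
end

section
/- Let f := T^{k+d} + f_{d−1}T^{k+d−1} + ⋯ + f_0T^k ∈ 𝔽_q[T] with 1 ≤ d < k. Every point x = (x_1,…,x_{k+1}) ∈ K^{k+1} satisfying H_d(x) = 0, f_{d−1}·H_{d−1}(x) = 0, and (∂H_d/∂X_i)(x) = 0 for all 1 ≤ i ≤ k+1 — this is the system satisfied by the singular points at infinity of the projective closure of the hypersurface {H_f = 0}, whose defining homogeneous polynomial is H_d + f_{d−1}H_{d−1}X_0 + ⋯ + f_1H_1X_0^{d−1} + f_0X_0^d — has at most d−1 pairwise-distinct coordinates. In particular, the set of such points is an affine cone contained in a finite union of linear subspaces of K^{k+1} of dimension d−1,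 so the singular locus at infinity of the projective closure has dimension at most d−2. -/
namespace S9
open Polynomial
section Dp
variable {F : Type*} [CommRing F] {σ : Type*}

/-- Coefficient-wise partial derivative on `(MvPolynomial σ F)[X]`. -/
noncomputable def Dp (i : σ) (p : Polynomial (MvPolynomial σ F)) :
    Polynomial (MvPolynomial σ F) :=
  PolynomialModule.equivPolynomialSelf ((MvPolynomial.pderiv i).mapCoeffs p)

lemma Dp_coeff (i : σ) (p : Polynomial (MvPolynomial σ F)) (n : ℕ) :
    (Dp i p).coeff n = MvPolynomial.pderiv i (p.coeff n) := rfl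

lemma Dp_mul (i : σ) (p q : Polynomial (MvPolynomial σ F)) :
    Dp i (p * q) = p * Dp i q + q * Dp i p := by
  unfold Dp
  rw [Derivation.leibniz, map_add, LinearEquiv.map_smul, LinearEquiv.map_smul,
    smul_eq_mul, smul_eq_mul]

lemma Dp_sub (i : σ) (p q : Polynomial (MvPolynomial σ F)) :
    Dp i (p - q) = Dp i p - Dp i q := by
  unfold Dp; rw [map_sub, map_sub]

lemma Dp_X_pow (i : σ) (n : ℕ) :
    Dp i ((X : Polynomial (MvPolynomial σ F)) ^ n) = 0 := by
  ext m
  rw [Dp_coeff, coeff_X_pow]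
  split_ifs <;> simp

lemma Dp_X_sub_C [DecidableEq σ] (i a : σ) :
    Dp i ((X : Polynomial (MvPolynomial σ F)) - C (MvPolynomial.X a)) =
      if i = a then -1 else 0 := by
  ext n
  rw [Dp_coeff, coeff_sub, map_sub]
  rcases eq_or_ne i a with h | h
  · subst h
    simp only [if_pos rfl]
    rw [coeff_X, Polynomial.coeff_C]
    split_ifs <;>
      simp_all [MvPolynomial.pderiv_X_self, Polynomial.coeff_neg, Polynomial.coeff_one]
  · simp only [if_neg h]
    rw [coeff_X, Polynomial.coeff_C]
    split_ifs <;>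
      simp_all [MvPolynomial.pderiv_X_of_ne (Ne.symm h)]

lemma Dp_prod [DecidableEq σ] (i : σ) (s : Finset σ) :
    Dp i (∏ l ∈ s, ((X : Polynomial (MvPolynomial σ F)) - C (MvPolynomial.X l))) =
      if i ∈ s then -∏ l ∈ s.erase i, ((X : Polynomial (MvPolynomial σ F)) - C (MvPolynomial.X l))
      else 0 := by
  induction s using Finset.induction with
  | empty => simpa using Dp_X_pow i 0
  | insert _ _ ha ih =>
    rename_i a s'
    rw [Finset.prod_insert ha, Dp_mul, ih, Dp_X_sub_C]
    rcases eq_or_ne i a with h | h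
    · subst h
      simp [ha, Finset.erase_insert ha]
      ring
    · rw [if_neg h]
      rcases em (i ∈ s') with h2 | h2
      · rw [if_pos h2, if_pos (Finset.mem_insert_of_mem h2),
          Finset.erase_insert_of_ne (Ne.symm h), Finset.prod_insert
          (fun hc => ha (Finset.mem_of_mem_erase hc))]
        ring
      · rw [if_neg h2, if_neg (by simp [h, h2])]
        ring

lemma Dp_degree_le (i : σ) (p : Polynomial (MvPolynomial σ F)) :
    (Dp i p).degree ≤ p.degree := by
  rw [degree_le_iff_coeff_zero]
  intro m hm
  rw [Dp_coeff, coeff_eq_zero_of_degree_lt hm, map_zero]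

end Dp

section Kside
variable {K : Type*} [CommRing K] [IsDomain K]

lemma monicQK (k : ℕ) (x : Fin (k+1) → K) :
    (∏ l, ((X:K[X]) - C (x l))).Monic :=
  monic_prod_of_monic _ _ (fun _ _ => monic_X_sub_C _)

lemma degQK (k : ℕ) (x : Fin (k+1) → K) :
    (∏ l, ((X:K[X]) - C (x l))).degree = ((k+1 : ℕ) : WithBot ℕ) := by
  rw [degree_prod]
  simp [degree_X_sub_C, Finset.sum_const, Finset.card_univ]

lemma modself {k : ℕ} {x : Fin (k+1) → K} {p : K[X]} (hp : p.degree < ((k+1:ℕ) : WithBot ℕ)) :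
    p %ₘ (∏ l, ((X:K[X]) - C (x l))) = p := by
  rw [modByMonic_eq_self_iff (monicQK k x), degQK]; exact hp

lemma coeff_pow_mod {k : ℕ} (x : Fin (k+1) → K) {j : ℕ} (hj : j ≤ k) :
    (((X:K[X])^j) %ₘ (∏ l, ((X:K[X]) - C (x l)))).coeff k = if j = k then 1 else 0 := by
  rw [modself (by rw [degree_X_pow]; exact_mod_cast Nat.lt_succ_of_le hj), coeff_X_pow]
  simp [eq_comm]

lemma key (k d : ℕ) (hd : 1 ≤ d) (x : Fin (k+1) → K) (i : Fin (k+1)) (W : K[X])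
    (hW : (∏ l, ((X:K[X]) - C (x l))) * W
      = X^(k+d) - (X^(k+d) %ₘ (∏ l, ((X:K[X]) - C (x l))))) :
    ((W * ∏ l ∈ Finset.univ.erase i, ((X:K[X]) - C (x l)))
        %ₘ (∏ l, ((X:K[X]) - C (x l)))).coeff k
      = ∑ m ∈ Finset.range d, (x i)^m *
          (((X:K[X])^(k+(d-1-m)) %ₘ (∏ l, ((X:K[X]) - C (x l)))).coeff k) := by
  set Q : K[X] := ∏ l, ((X:K[X]) - C (x l)) with hQdef
  have hQ : Q.Monic := monicQK k x
  have hdegQ : Q.degree = ((k+1:ℕ) : WithBot ℕ) := degQK k x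
  set a := x i with ha
  set R : K[X] := (X:K[X])^(k+d) %ₘ Q with hRdef
  have hdegR : R.degree < ((k+1:ℕ) : WithBot ℕ) := hdegQ ▸ degree_modByMonic_lt _ hQ
  have hQa : Q.eval a = 0 := by
    rw [hQdef, eval_prod]
    exact Finset.prod_eq_zero (Finset.mem_univ i) (by simp [ha])
  have hRa : R.eval a = a^(k+d) := by
    have h := congrArg (eval a) hW
    simp only [eval_mul, hQa, zero_mul, eval_sub, eval_pow, eval_X] at h
    exact (sub_eq_zero.mp h.symm).symm
  obtain ⟨q, hq⟩ := X_sub_C_dvd_sub_C_eval (a := a) (p := R)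
  have hCR : C (R.eval a) = (C a)^(k+d) := by rw [hRa, C_pow]
  set G : K[X] := ∑ j ∈ Finset.range (k+d), X^j * (C a)^(k+d-1-j) with hGdef
  have hG : G * (X - C a) = X^(k+d) - (C a)^(k+d) := geom_sum₂_mul _ _ _
  have hfact : (X - C a) * (W * ∏ l ∈ Finset.univ.erase i, ((X:K[X]) - C (x l)))
      = (X - C a) * (G - q) := by
    have h1 : (X - C a) * ∏ l ∈ Finset.univ.erase i, ((X:K[X]) - C (x l)) = Q := by
      rw [hQdef, ha]
      exact Finset.mul_prod_erase Finset.univ (fun l => (X:K[X]) - C (x l)) (Finset.mem_univ i)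
    calc (X - C a) * (W * ∏ l ∈ Finset.univ.erase i, ((X:K[X]) - C (x l)))
        = ((X - C a) * ∏ l ∈ Finset.univ.erase i, ((X:K[X]) - C (x l))) * W := by ring
      _ = Q * W := by rw [h1]
      _ = X^(k+d) - R := hW
      _ = (G * (X - C a) + (C a)^(k+d)) - ((X - C a) * q + C (R.eval a)) := by
          rw [hG, ← hq, hCR]; ring
      _ = (X - C a) * (G - q) := by rw [hCR]; ring
  have hWP : W * ∏ l ∈ Finset.univ.erase i, ((X:K[X]) - C (x l)) = G - q :=
    mul_left_cancel₀ (X_sub_C_ne_zero a) hfact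
  have hdegRC : (R - C (R.eval a)).degree < ((k+1:ℕ) : WithBot ℕ) :=
    lt_of_le_of_lt (degree_sub_le _ _)
      (max_lt hdegR (lt_of_le_of_lt degree_C_le (by exact_mod_cast Nat.succ_pos k)))
  have hdegq : q.degree < ((k+1:ℕ) : WithBot ℕ) := by
    rcases eq_or_ne (R - C (R.eval a)) 0 with h0 | h0
    · have hq0 : q = 0 := by
        rcases mul_eq_zero.1 (h0 ▸ hq.symm) with h | h
        · exact absurd h (X_sub_C_ne_zero a)
        · exact h
      rw [hq0, degree_zero]
      exact WithBot.bot_lt_coe _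
    · exact lt_of_le_of_lt (degree_le_of_dvd ⟨X - C a, by rw [hq]; ring⟩ h0) hdegRC
  have hqk : q.coeff k = 0 := by
    have h1 : (q * (X - C a)).coeff (k+1) = q.coeff k - q.coeff (k+1) * a :=
      coeff_mul_X_sub_C
    have h2 : (q * (X - C a)) = R - C (R.eval a) := by rw [hq]; ring
    have h3 : (R - C (R.eval a)).coeff (k+1) = 0 :=
      coeff_eq_zero_of_degree_lt (by exact_mod_cast hdegRC)
    have h4 : q.coeff (k+1) = 0 :=
      coeff_eq_zero_of_degree_lt (lt_of_lt_of_le hdegq (by exact_mod_cast le_rfl))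
    rw [h2, h3, h4] at h1
    simpa using h1.symm
  rw [hWP, sub_modByMonic, modself hdegq, coeff_sub, hqk, sub_zero]
  have hGm : (G %ₘ Q).coeff k
      = ∑ j ∈ Finset.range (k+d), a^(k+d-1-j) * (((X:K[X])^j %ₘ Q).coeff k) := by
    rw [hGdef]
    have hsum : (∑ j ∈ Finset.range (k+d), X^j * (C a)^(k+d-1-j)) %ₘ Q
        = ∑ j ∈ Finset.range (k+d), (a^(k+d-1-j)) • (((X:K[X])^j) %ₘ Q) := by
      rw [← Polynomial.modByMonicHom_apply, map_sum]
      refine Finset.sum_congr rfl (fun j _ => ?_)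
      rw [← map_pow, mul_comm, ← smul_eq_C_mul, map_smul, Polynomial.modByMonicHom_apply]
    rw [hsum, finset_sum_coeff]
    refine Finset.sum_congr rfl (fun j _ => ?_)
    rw [coeff_smul, smul_eq_mul]
  rw [hGm, Finset.range_eq_Ico,
    ← Finset.sum_Ico_consecutive _ (Nat.zero_le k) (Nat.le_add_right k d)]
  have hfirst : ∑ j ∈ Finset.Ico 0 k, a^(k+d-1-j) * (((X:K[X])^j %ₘ Q).coeff k) = 0 := by
    refine Finset.sum_eq_zero fun j hj => ?_
    obtain ⟨_, hjk⟩ := Finset.mem_Ico.mp hj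
    rw [hQdef, coeff_pow_mod x (le_of_lt hjk), if_neg (Nat.ne_of_lt hjk), mul_zero]
  rw [hfirst, zero_add, Finset.sum_Ico_eq_sum_range]
  have hkd : k + d - k = d := by omega
  rw [hkd]
  have hL : ∑ r ∈ Finset.range d, a^(k+d-1-(k+r)) * (((X:K[X])^(k+r) %ₘ Q).coeff k)
      = ∑ r ∈ Finset.range d,
          (fun r => a^(d-1-r) * (((X:K[X])^(k+r) %ₘ Q).coeff k)) r := by
    refine Finset.sum_congr rfl fun r hr => ?_
    have : k+d-1-(k+r) = d-1-r := by omega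
    rw [this]
  rw [hL, ← Finset.sum_range_reflect]
  refine Finset.sum_congr rfl fun m hm => ?_
  have hm' : m < d := Finset.mem_range.mp hm
  have : d-1-(d-1-m) = m := by omega
  rw [this]

end Kside
end S9

open scoped Classical in
theorem stmt9 {F : Type*} [Field F] (k d : ℕ) (hd : 1 ≤ d) (hdk : d < k)
    (fc : Fin d → F)
    (x : Fin (k + 1) → AlgebraicClosure F)
    (hx0 : MvPolynomial.aeval x (Hcoef F k (Polynomial.X ^ (k + d))) = 0)
    (hx1 : algebraMap F (AlgebraicClosure F) (fc ⟨d - 1, Nat.sub_lt hd Nat.one_pos⟩) *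
        MvPolynomial.aeval x (Hcoef F k (Polynomial.X ^ (k + (d - 1)))) = 0)
    (hx2 : ∀ i : Fin (k + 1),
      MvPolynomial.aeval x (MvPolynomial.pderiv i (Hcoef F k (Polynomial.X ^ (k + d)))) = 0) :
    (Finset.univ.image x).card ≤ d - 1 := by
  classical
  open Polynomial in
  set φ : (MvPolynomial (Fin (k+1)) F) →+* (AlgebraicClosure F) := (MvPolynomial.aeval x).toRingHom with hφdef
  set QK : (AlgebraicClosure F)[X] := ∏ l, ((X:(AlgebraicClosure F)[X]) - C (x l)) with hQKdef
  have hmonicQ : (Qpoly F k).Monic :=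
    monic_prod_of_monic _ _ (fun _ _ => monic_X_sub_C _)
  have hmapQ : (Qpoly F k).map φ = QK := by
    rw [Qpoly, Polynomial.map_prod, hQKdef]
    refine Finset.prod_congr rfl fun l _ => ?_
    rw [Polynomial.map_sub, Polynomial.map_X, Polynomial.map_C]
    simp only [hφdef, AlgHom.toRingHom_eq_coe, RingHom.coe_coe, MvPolynomial.aeval_X]
  -- the polynomial R and quotient S over (MvPolynomial (Fin (k+1)) F)
  set R : Polynomial (MvPolynomial (Fin (k+1)) F) := (X:Polynomial (MvPolynomial (Fin (k+1)) F))^(k+d) %ₘ Qpoly F k with hRdef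
  set S : Polynomial (MvPolynomial (Fin (k+1)) F) := (X:Polynomial (MvPolynomial (Fin (k+1)) F))^(k+d) /ₘ Qpoly F k with hSdef
  have hRS : R + Qpoly F k * S = (X:Polynomial (MvPolynomial (Fin (k+1)) F))^(k+d) := modByMonic_add_div _ _
  have hHc : Hcoef F k (Polynomial.X ^ (k + d)) = R.coeff k := by
    rw [Hcoef, Polynomial.map_pow, Polynomial.map_X, hRdef]
  -- the derivative of R
  have hDpR : ∀ i : Fin (k+1), S9.Dp i R =
      S * (∏ l ∈ Finset.univ.erase i, ((X:Polynomial (MvPolynomial (Fin (k+1)) F)) - C (MvPolynomial.X l)))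
        - Qpoly F k * S9.Dp i S := by
    intro i
    have h0 : S9.Dp i ((X:Polynomial (MvPolynomial (Fin (k+1)) F))^(k+d)) = 0 := S9.Dp_X_pow i _
    have h1 : S9.Dp i (R + Qpoly F k * S) = 0 := by rw [hRS]; exact h0
    have h2 : S9.Dp i (Qpoly F k) =
        -∏ l ∈ Finset.univ.erase i, ((X:Polynomial (MvPolynomial (Fin (k+1)) F)) - C (MvPolynomial.X l)) := by
      rw [Qpoly]
      rw [S9.Dp_prod i Finset.univ, if_pos (Finset.mem_univ i)]
    have h3 : S9.Dp i (R + Qpoly F k * S)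
        = S9.Dp i R + (Qpoly F k * S9.Dp i S + S * S9.Dp i (Qpoly F k)) := by
      have := S9.Dp_sub i (R + Qpoly F k * S) (Qpoly F k * S)
      simp only [add_sub_cancel_right] at this
      rw [S9.Dp_mul] at this
      linear_combination -this
    rw [h3, h2] at h1
    linear_combination h1
  -- value of the derivative hypothesis in (AlgebraicClosure F)
  have hkey : ∀ i : Fin (k+1),
      MvPolynomial.aeval x (MvPolynomial.pderiv i (Hcoef F k (Polynomial.X ^ (k + d))))
      = ∑ m ∈ Finset.range d, (x i)^m * (((X:(AlgebraicClosure F)[X])^(k+(d-1-m)) %ₘ QK).coeff k) := by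
    intro i
    rw [hHc]
    have hb : MvPolynomial.aeval x (MvPolynomial.pderiv i (R.coeff k))
        = ((S9.Dp i R).map φ).coeff k := by
      rw [Polynomial.coeff_map, S9.Dp_coeff]
      rfl
    rw [hb]
    -- map of the derivative identity
    have hmapDR : (S9.Dp i R).map φ =
        (S.map φ) * (∏ l ∈ Finset.univ.erase i, ((X:(AlgebraicClosure F)[X]) - C (x l)))
          - QK * ((S9.Dp i S).map φ) := by
      rw [hDpR i, Polynomial.map_sub, Polynomial.map_mul, Polynomial.map_mul, hmapQ,
        Polynomial.map_prod]
      congr 1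
      congr 1
      refine Finset.prod_congr rfl fun l _ => ?_
      rw [Polynomial.map_sub, Polynomial.map_X, Polynomial.map_C]
      simp only [hφdef, AlgHom.toRingHom_eq_coe, RingHom.coe_coe, MvPolynomial.aeval_X]
    -- degree bound
    have hdegQA : (Qpoly F k).degree = ((k+1:ℕ) : WithBot ℕ) := by
      rw [Qpoly]
      exact S9.degQK k MvPolynomial.X
    have hdeg : ((S9.Dp i R).map φ).degree < ((k+1:ℕ) : WithBot ℕ) := by
      refine lt_of_le_of_lt (degree_map_le.trans (S9.Dp_degree_le i R)) ?_
      rw [hRdef]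
      exact hdegQA ▸ degree_modByMonic_lt _ hmonicQ
    have hself : ((S9.Dp i R).map φ) %ₘ QK = (S9.Dp i R).map φ := S9.modself hdeg
    rw [← hself, hmapDR, sub_modByMonic,
      (modByMonic_eq_zero_iff_dvd (S9.monicQK k x)).2 (Dvd.intro _ rfl), sub_zero]
    -- apply key
    refine S9.key k d hd x i (S.map φ) ?_
    have := congrArg (Polynomial.map φ) hRS
    rw [Polynomial.map_add, Polynomial.map_mul, hmapQ, Polynomial.map_pow, Polynomial.map_X,
      Polynomial.map_modByMonic _ hmonicQ, hmapQ, Polynomial.map_pow, Polynomial.map_X] at this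
    linear_combination this
  -- the counting polynomial
  set p : (AlgebraicClosure F)[X] := ∑ m ∈ Finset.range d, C (((X:(AlgebraicClosure F)[X])^(k+(d-1-m)) %ₘ QK).coeff k) * X^m
    with hpdef
  have hp1 : p.coeff (d-1) = 1 := by
    rw [hpdef, finset_sum_coeff]
    rw [Finset.sum_eq_single (d-1)]
    · rw [coeff_C_mul, coeff_X_pow, if_pos rfl]
      have : d - 1 - (d - 1) = 0 := by omega
      rw [this]
      have : k + 0 = k := by omega
      rw [this, hQKdef, S9.coeff_pow_mod x (le_refl k), if_pos rfl, mul_one]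
    · intro m _ hm
      rw [coeff_C_mul, coeff_X_pow, if_neg (fun h => hm h.symm), mul_zero]
    · intro h
      exact absurd (Finset.mem_range.mpr (by omega)) h
  have hpne : p ≠ 0 := fun h => by simp [h] at hp1
  have hdegp : p.natDegree ≤ d - 1 := by
    rw [hpdef]
    refine natDegree_sum_le_of_forall_le _ _ fun m hm => ?_
    refine le_trans (natDegree_C_mul_le _ _) ?_
    rw [natDegree_X_pow]
    have := Finset.mem_range.mp hm
    omega
  -- every coordinate is a root of p
  have hroot : ∀ i : Fin (k+1), p.eval (x i) = 0 := by
    intro i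
    rw [hpdef, eval_finset_sum]
    have := (hkey i).symm.trans (hx2 i)
    rw [← this]
    refine Finset.sum_congr rfl fun m _ => ?_
    rw [eval_mul, eval_C, eval_pow, eval_X]
    ring
  -- conclude
  refine le_trans ?_ hdegp
  refine Polynomial.card_le_degree_of_subset_roots ?_
  intro y hy
  obtain ⟨i, _, rfl⟩ := Finset.mem_image.mp (Finset.mem_val.mp hy)
  exact (Polynomial.mem_roots hpne).mpr (hroot i)
end

section
/- Fix positive integers k and d with 2 ≤ d < k, and let H_d ∈ 𝔽_q[X_1,…,X_{k+1}] be the polynomial associated to the monomial T^{k+d}. Suppose there exists a partition {I_1,…,I_{d−1}} of {1,…,k+1} into d−1 nonempty subsets such that every point of the K-linear span of the indicator vectors v^{(I_1)},…,v^{(I_{d−1})} is a singular point of the hypersurface {H_d = 0} ⊆ K^{k+1} (this holds whenever the singular locus of {H_d = 0} has dimension d−1). Then the characteristic p of 𝔽_q divides k+d. -/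
namespace Stmt13Aux

open Polynomial MvPolynomial

variable {F : Type*} [Field F] {k : ℕ}

noncomputable def Qi (F : Type*) [Field F] (k : ℕ) (i : Fin (k + 1)) :
    Polynomial (MvPolynomial (Fin (k + 1)) F) :=
  ∏ m ∈ Finset.univ.erase i, (Polynomial.X - Polynomial.C (MvPolynomial.X m))

lemma Qmonic : (Qpoly F k).Monic :=
  monic_prod_of_monic _ _ fun i _ => monic_X_sub_C _

lemma Qdeg : (Qpoly F k).natDegree = k + 1 := by
  rw [Qpoly, natDegree_prod]
  · simp
  · intro i _; exact (monic_X_sub_C _).ne_zero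

lemma Qdegree : (Qpoly F k).degree = (k + 1 : ℕ) := by
  rw [Polynomial.degree_eq_natDegree (Qmonic).ne_zero, Qdeg]

lemma Qimonic {i : Fin (k+1)} : (Qi F k i).Monic :=
  monic_prod_of_monic _ _ fun m _ => monic_X_sub_C _

lemma Qideg {i : Fin (k+1)} : (Qi F k i).natDegree = k := by
  rw [Qi, natDegree_prod]
  · simp [Finset.card_erase_of_mem]
  · intro m _; exact (monic_X_sub_C _).ne_zero

lemma QiCoeff_k {i : Fin (k+1)} : (Qi F k i).coeff k = 1 := by
  have := Qimonic (F := F) (k := k) (i := i)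
  rw [Monic, leadingCoeff, Qideg] at this
  exact this

lemma Qfactor (i : Fin (k+1)) :
    Qpoly F k = (Polynomial.X - Polynomial.C (MvPolynomial.X i)) * Qi F k i := by
  rw [Qpoly, Qi, ← Finset.mul_prod_erase Finset.univ _ (Finset.mem_univ i)]

lemma linfree (i : Fin (k+1)) :
    ∀ (s : Finset (Fin (k+1))), i ∉ s → ∀ a,
      pderiv i (Polynomial.coeff (∏ m ∈ s, (Polynomial.X -
        Polynomial.C (MvPolynomial.X m)) : Polynomial (MvPolynomial (Fin (k+1)) F)) a) = 0 := by
  intro s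
  induction s using Finset.cons_induction with
  | empty => intro _ a; simp [Polynomial.coeff_one, apply_ite (pderiv i)]
  | cons m s hm ih =>
      intro hi a
      have hmi : m ≠ i := by rintro rfl; exact hi (Finset.mem_cons_self _ _)
      have his : i ∉ s := fun h => hi (Finset.mem_cons.mpr (Or.inr h))
      rw [Finset.prod_cons, sub_mul, Polynomial.coeff_sub, map_sub,
        Polynomial.coeff_C_mul, pderiv_mul, pderiv_X_of_ne hmi, ih his]
      cases a with
      | zero => simp [ih his]
      | succ a => rw [Polynomial.coeff_X_mul, ih his]; ring

lemma Qi_ifree (i : Fin (k+1)) : ∀ a, pderiv i ((Qi F k i).coeff a) = 0 := by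
  rw [Qi]
  exact linfree i _ (Finset.notMem_erase i _)

lemma pderivQcoeff (i : Fin (k+1)) :
    ∀ a, pderiv i ((Qpoly F k).coeff a) = -(Qi F k i).coeff a := by
  intro a
  rw [Qfactor i, sub_mul, Polynomial.coeff_sub, map_sub, Polynomial.coeff_C_mul,
    pderiv_mul, pderiv_X_self, Qi_ifree]
  cases a with
  | zero =>
      simp [Qi_ifree]
  | succ a =>
      rw [Polynomial.coeff_X_mul, Qi_ifree]
      ring

lemma Qcoeff_succ (i : Fin (k+1)) (a : ℕ) :
    (Qpoly F k).coeff (a+1)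
      = (Qi F k i).coeff a - MvPolynomial.X i * (Qi F k i).coeff (a+1) := by
  rw [Qfactor i, sub_mul, Polynomial.coeff_sub, Polynomial.coeff_X_mul,
    Polynomial.coeff_C_mul]

lemma Qcoeff_zero (i : Fin (k+1)) :
    (Qpoly F k).coeff 0 = -(MvPolynomial.X i * (Qi F k i).coeff 0) := by
  rw [Qfactor i, sub_mul, Polynomial.coeff_sub, Polynomial.mul_coeff_zero,
    Polynomial.coeff_X_zero, Polynomial.coeff_C_mul, zero_mul, zero_sub]

lemma Rrec (n : ℕ) :
    ((Polynomial.X : Polynomial (MvPolynomial (Fin (k+1)) F))^(n+1) %ₘ Qpoly F k)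
        = Polynomial.X * (Polynomial.X^n %ₘ Qpoly F k)
          - Polynomial.C ((Polynomial.X^n %ₘ Qpoly F k).coeff k) * Qpoly F k ∧
    ((Polynomial.X : Polynomial (MvPolynomial (Fin (k+1)) F))^(n+1) /ₘ Qpoly F k)
        = Polynomial.X * (Polynomial.X^n /ₘ Qpoly F k)
          + Polynomial.C ((Polynomial.X^n %ₘ Qpoly F k).coeff k) := by
  have hQ : (Qpoly F k).Monic := Qmonic
  have hdeg : ((Polynomial.X : Polynomial (MvPolynomial (Fin (k+1)) F))^n %ₘ Qpoly F k).degree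
      < (Qpoly F k).degree := degree_modByMonic_lt _ hQ
  have hsum : (Polynomial.X : Polynomial (MvPolynomial (Fin (k+1)) F))^n %ₘ Qpoly F k
      + Qpoly F k * (Polynomial.X^n /ₘ Qpoly F k) = Polynomial.X^n :=
    modByMonic_add_div _ _
  have hdeg2 : (Polynomial.X * (Polynomial.X^n %ₘ Qpoly F k)
      - Polynomial.C ((Polynomial.X^n %ₘ Qpoly F k).coeff k) * Qpoly F k).degree
      < (Qpoly F k).degree := by
    rw [Qdegree, degree_lt_iff_coeff_zero]
    intro m hm
    have hm' : k + 1 ≤ m := by exact_mod_cast hm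
    obtain ⟨m', rfl⟩ : ∃ m', m = m' + 1 := ⟨m - 1, by omega⟩
    rw [Polynomial.coeff_sub, Polynomial.coeff_X_mul, Polynomial.coeff_C_mul]
    rcases eq_or_lt_of_le (show k ≤ m' by omega) with h | h
    · subst h
      have : (Qpoly F k).coeff (k + 1) = 1 := by
        have := hQ.coeff_natDegree
        rwa [Qdeg] at this
      rw [this, mul_one, sub_self]
    · have h1 : ((Polynomial.X : Polynomial (MvPolynomial (Fin (k+1)) F))^n
          %ₘ Qpoly F k).coeff m' = 0 := by
        refine coeff_eq_zero_of_degree_lt (lt_of_lt_of_le hdeg ?_)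
        rw [Qdegree]
        exact_mod_cast show k + 1 ≤ m' by omega
      have h2 : (Qpoly F k).coeff (m' + 1) = 0 := by
        refine coeff_eq_zero_of_degree_lt ?_
        rw [Qdegree]
        exact_mod_cast show k + 1 < m' + 1 by omega
      rw [h1, h2, mul_zero, sub_self]
  have halg : (Polynomial.X * (Polynomial.X^n %ₘ Qpoly F k)
        - Polynomial.C ((Polynomial.X^n %ₘ Qpoly F k).coeff k) * Qpoly F k)
      + Qpoly F k * (Polynomial.X * (Polynomial.X^n /ₘ Qpoly F k)
        + Polynomial.C ((Polynomial.X^n %ₘ Qpoly F k).coeff k))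
      = (Polynomial.X : Polynomial (MvPolynomial (Fin (k+1)) F))^(n+1) := by
    calc _ = Polynomial.X * ((Polynomial.X : Polynomial (MvPolynomial (Fin (k+1)) F))^n %ₘ Qpoly F k
          + Qpoly F k * (Polynomial.X^n /ₘ Qpoly F k)) := by ring
    _ = _ := by rw [hsum, ← pow_succ']
  have h := div_modByMonic_unique _ _ hQ ⟨halg, hdeg2⟩
  exact ⟨h.2, h.1⟩

lemma key (i : Fin (k+1)) : ∀ n, ∃ γ : MvPolynomial (Fin (k+1)) F,
    (∀ a, pderiv i (((Polynomial.X : Polynomial (MvPolynomial (Fin (k+1)) F))^n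
          %ₘ Qpoly F k).coeff a) = γ * (Qi F k i).coeff a) ∧
    (Polynomial.X - Polynomial.C (MvPolynomial.X i)) ∣
      ((Polynomial.X : Polynomial (MvPolynomial (Fin (k+1)) F))^n /ₘ Qpoly F k
        - Polynomial.C γ) := by
  intro n
  induction n with
  | zero =>
      refine ⟨0, ?_, ?_⟩
      · have h1 : (Polynomial.X : Polynomial (MvPolynomial (Fin (k+1)) F))^0 %ₘ Qpoly F k = 1 := by
          rw [pow_zero]
          refine (modByMonic_eq_self_iff Qmonic).mpr ?_
          rw [Qdegree, degree_one]
          exact_mod_cast Nat.cast_pos.mpr (Nat.succ_pos k)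
        intro a
        rw [h1]
        simp [Polynomial.coeff_one, apply_ite (pderiv i)]
      · have h2 : (Polynomial.X : Polynomial (MvPolynomial (Fin (k+1)) F))^0 /ₘ Qpoly F k = 0 := by
          rw [pow_zero]
          refine (divByMonic_eq_zero_iff Qmonic).mpr ?_
          rw [Qdegree, degree_one]
          exact_mod_cast Nat.cast_pos.mpr (Nat.succ_pos k)
        rw [h2]
        simp
  | succ n ih =>
      obtain ⟨γ, h1, h2⟩ := ih
      have hγ : pderiv i (((Polynomial.X : Polynomial (MvPolynomial (Fin (k+1)) F))^n
          %ₘ Qpoly F k).coeff k) = γ := by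
        simpa [QiCoeff_k] using h1 k
      refine ⟨MvPolynomial.X i * γ + ((Polynomial.X : Polynomial (MvPolynomial (Fin (k+1)) F))^n
          %ₘ Qpoly F k).coeff k, ?_, ?_⟩
      · intro a
        rw [(Rrec n).1]
        cases a with
        | zero =>
            rw [Polynomial.coeff_sub, Polynomial.coeff_C_mul, Polynomial.mul_coeff_zero,
              Polynomial.coeff_X_zero, zero_mul, zero_sub, map_neg, pderiv_mul, hγ,
              pderivQcoeff i, Qcoeff_zero i]
            ring
        | succ a =>
            rw [Polynomial.coeff_sub, Polynomial.coeff_C_mul, Polynomial.coeff_X_mul,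
              map_sub, pderiv_mul, hγ, pderivQcoeff i, h1 a, Qcoeff_succ i a]
            ring
      · rw [(Rrec n).2]
        have heq : Polynomial.X * ((Polynomial.X : Polynomial (MvPolynomial (Fin (k+1)) F))^n
              /ₘ Qpoly F k) + Polynomial.C (((Polynomial.X : Polynomial (MvPolynomial (Fin (k+1)) F))^n %ₘ Qpoly F k).coeff k)
              - Polynomial.C (MvPolynomial.X i * γ + ((Polynomial.X : Polynomial (MvPolynomial (Fin (k+1)) F))^n %ₘ Qpoly F k).coeff k)
            = (Polynomial.X - Polynomial.C (MvPolynomial.X i)) * ((Polynomial.X : Polynomial (MvPolynomial (Fin (k+1)) F))^n /ₘ Qpoly F k)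
              + Polynomial.C (MvPolynomial.X i) * (((Polynomial.X : Polynomial (MvPolynomial (Fin (k+1)) F))^n /ₘ Qpoly F k) - Polynomial.C γ) := by
          rw [Polynomial.C_add, Polynomial.C_mul]
          ring
        rw [heq]
        exact dvd_add (Dvd.intro _ rfl) (Dvd.dvd.mul_left h2 _)

end Stmt13Aux

open Stmt13Aux Polynomial in
theorem stmt13 {F : Type*} [Field F] (k d : ℕ) (hd : 2 ≤ d) (hdk : d < k)
    (P : Fin (d - 1) → Finset (Fin (k + 1)))
    (hPne : ∀ j, (P j).Nonempty)
    (hPdisj : ∀ j j', j ≠ j' → Disjoint (P j) (P j'))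
    (hPcover : ∀ m : Fin (k + 1), ∃ j, m ∈ P j)
    (hsing : ∀ c : Fin (d - 1) → AlgebraicClosure F,
      MvPolynomial.aeval (fun m => ∑ j, if m ∈ P j then c j else 0)
          (Hcoef F k (Polynomial.X ^ (k + d))) = 0 ∧
      ∀ i : Fin (k + 1),
        MvPolynomial.aeval (fun m => ∑ j, if m ∈ P j then c j else 0)
          (MvPolynomial.pderiv i (Hcoef F k (Polynomial.X ^ (k + d)))) = 0) :
    ringChar F ∣ (k + d) := by
  classical
  set K := AlgebraicClosure F with hK
  have hcard : ∑ j, (P j).card = k + 1 := by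
    have huniv : (Finset.univ : Finset (Fin (k+1))) = Finset.univ.biUnion P := by
      ext m; simpa using hPcover m
    calc ∑ j, (P j).card
        = (Finset.univ.biUnion P).card :=
          (Finset.card_biUnion (fun j _ j' _ h => hPdisj j j' h)).symm
      _ = k + 1 := by rw [← huniv, Finset.card_univ, Fintype.card_fin]
  -- the main linear relation, for injective c
  have main : ∀ c : Fin (d-1) → K, Function.Injective c →
      ∑ j, (((P j).card + 1 : ℕ) : K) * c j = 0 := by
    intro c hcinj
    set y : Fin (k+1) → K := fun m => ∑ j, if m ∈ P j then c j else 0 with hy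
    have hyval : ∀ j, ∀ m ∈ P j, y m = c j := by
      intro j m hm
      have hz : ∀ j' ∈ Finset.univ, j' ≠ j → (if m ∈ P j' then c j' else 0) = 0 := by
        intro j' _ hne
        rw [if_neg]
        exact fun hm' => (Finset.disjoint_left.mp (hPdisj j' j hne) hm') hm
      show (∑ j' : Fin (d-1), if m ∈ P j' then c j' else 0) = c j
      rw [Finset.sum_eq_single_of_mem j (Finset.mem_univ j) hz, if_pos hm]
    obtain ⟨_, hder⟩ := hsing c
    set φ : MvPolynomial (Fin (k+1)) F →+* K :=
      (MvPolynomial.aeval y : MvPolynomial (Fin (k+1)) F →ₐ[F] K).toRingHom with hφ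
    have hφX : ∀ m, φ (MvPolynomial.X m) = y m := fun m => MvPolynomial.aeval_X y m
    set RK : Polynomial K :=
      ((Polynomial.X : Polynomial (MvPolynomial (Fin (k+1)) F))^(k+d) %ₘ Qpoly F k).map φ
      with hRK
    set AK : Polynomial K :=
      ((Polynomial.X : Polynomial (MvPolynomial (Fin (k+1)) F))^(k+d) /ₘ Qpoly F k).map φ
      with hAK
    set QK : Polynomial K := (Qpoly F k).map φ with hQKdef
    -- mapped division identity
    have hDiv : (Polynomial.X : Polynomial K)^(k+d) - RK = QK * AK := by
      have hs := Polynomial.modByMonic_add_div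
        ((Polynomial.X : Polynomial (MvPolynomial (Fin (k+1)) F))^(k+d)) (Qpoly F k)
      have := congrArg (Polynomial.map φ) hs
      rw [Polynomial.map_add, Polynomial.map_mul, Polynomial.map_pow, Polynomial.map_X] at this
      rw [← this]; ring
    -- QK as a product
    have hQK : QK = ∏ m : Fin (k+1), (Polynomial.X - Polynomial.C (y m)) := by
      rw [hQKdef, Qpoly, Polynomial.map_prod]
      refine Finset.prod_congr rfl fun m _ => ?_
      rw [Polynomial.map_sub, Polynomial.map_X, Polynomial.map_C, hφX]
    -- each root divides AK
    have hAy : ∀ i : Fin (k+1), (Polynomial.X - Polynomial.C (y i)) ∣ AK := by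
      intro i
      obtain ⟨γ, h1, h2⟩ := key (F := F) i (k+d)
      have hγH : γ = MvPolynomial.pderiv i (Hcoef F k (Polynomial.X ^ (k+d))) := by
        have h1k := h1 k
        rw [QiCoeff_k, mul_one] at h1k
        rw [← h1k, Hcoef, Polynomial.map_pow, Polynomial.map_X]
      have hφγ : φ γ = 0 := by rw [hγH]; exact hder i
      have hmap := Polynomial.map_dvd φ h2
      rw [Polynomial.map_sub, Polynomial.map_sub, Polynomial.map_X, Polynomial.map_C,
        Polynomial.map_C, hφX, hφγ, Polynomial.C_0, sub_zero] at hmap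
      exact hmap
    -- blockwise divisibility
    have hj : ∀ j, (Polynomial.X - Polynomial.C (c j))^((P j).card + 1)
        ∣ ((Polynomial.X : Polynomial K)^(k+d) - RK) := by
      intro j
      obtain ⟨i, hi⟩ := hPne j
      have h1 : (Polynomial.X - Polynomial.C (c j))^((P j).card) ∣ QK := by
        have hprodeq : (Polynomial.X - Polynomial.C (c j))^((P j).card)
            = ∏ m ∈ P j, (Polynomial.X - Polynomial.C (y m)) := by
          rw [Finset.prod_congr rfl (fun m hm => by rw [hyval j m hm]), Finset.prod_const]
        rw [hQK, hprodeq]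
        exact Finset.prod_dvd_prod_of_subset _ _ _ (Finset.subset_univ _)
      have h2 : (Polynomial.X - Polynomial.C (c j)) ∣ AK := by
        have := hAy i
        rwa [hyval j i hi] at this
      rw [hDiv, pow_succ]
      exact mul_dvd_mul h1 h2
    have hprod : (∏ j, (Polynomial.X - Polynomial.C (c j))^((P j).card + 1))
        ∣ ((Polynomial.X : Polynomial K)^(k+d) - RK) := by
      refine Finset.prod_dvd_of_coprime ?_ (fun j _ => hj j)
      intro j _ j' _ hne
      exact IsCoprime.pow (Polynomial.pairwise_coprime_X_sub_C hcinj hne)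
    -- degree bookkeeping
    have hdegRK : RK.degree < ((k+1 : ℕ) : WithBot ℕ) := by
      refine lt_of_le_of_lt Polynomial.degree_map_le ?_
      rw [← Qdegree (F := F) (k := k)]
      exact Polynomial.degree_modByMonic_lt _ Qmonic
    have hdegRK' : RK.degree < ((k+d : ℕ) : WithBot ℕ) :=
      lt_of_lt_of_le hdegRK (by exact_mod_cast show (k+1) ≤ k+d by omega)
    have hDmonic : ((Polynomial.X : Polynomial K)^(k+d) - RK).Monic :=
      Polynomial.monic_X_pow_sub (by exact_mod_cast hdegRK')
    have hDdeg : ((Polynomial.X : Polynomial K)^(k+d) - RK).degree = ((k+d : ℕ) : WithBot ℕ) := by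
      rw [Polynomial.degree_sub_eq_left_of_degree_lt, Polynomial.degree_X_pow]
      rw [Polynomial.degree_X_pow]; exact hdegRK'
    have hDnat : ((Polynomial.X : Polynomial K)^(k+d) - RK).natDegree = k + d :=
      Polynomial.natDegree_eq_of_degree_eq_some hDdeg
    have hsumdeg : ∑ j, ((P j).card + 1) = k + d := by
      rw [Finset.sum_add_distrib, hcard, Finset.sum_const, Finset.card_univ, Fintype.card_fin,
        smul_eq_mul, mul_one]
      omega
    have hPm : (∏ j, (Polynomial.X - Polynomial.C (c j))^((P j).card + 1)).Monic :=
      monic_prod_of_monic _ _ fun j _ => (monic_X_sub_C _).pow _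
    have hPdeg : (∏ j, (Polynomial.X - Polynomial.C (c j))^((P j).card + 1)).natDegree
        = k + d := by
      rw [Polynomial.natDegree_prod _ _ (fun j _ => ((monic_X_sub_C (c j)).pow _).ne_zero)]
      simp only [Polynomial.natDegree_pow, Polynomial.natDegree_X_sub_C, mul_one]
      exact hsumdeg
    -- the divisor is the whole thing
    obtain ⟨z, hz⟩ := hprod
    have hzm : z.Monic := hPm.of_mul_monic_left (hz ▸ hDmonic)
    have hznd : z.natDegree = 0 := by
      have hnd := congrArg Polynomial.natDegree hz
      rw [Polynomial.natDegree_mul hPm.ne_zero hzm.ne_zero, hPdeg, hDnat] at hnd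
      omega
    rw [hzm.natDegree_eq_zero.mp hznd, mul_one] at hz
    -- compare next-to-leading coefficients
    have hnextD : ((Polynomial.X : Polynomial K)^(k+d) - RK).nextCoeff = 0 := by
      have hpos : 0 < ((Polynomial.X : Polynomial K)^(k+d) - RK).natDegree := by
        rw [hDnat]; omega
      rw [Polynomial.nextCoeff_of_natDegree_pos hpos, hDnat,
        Polynomial.coeff_sub, Polynomial.coeff_X_pow, if_neg (by omega)]
      have hRK0 : RK.coeff (k + d - 1) = 0 := by
        refine Polynomial.coeff_eq_zero_of_degree_lt (lt_of_lt_of_le hdegRK ?_)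
        exact_mod_cast show k + 1 ≤ k + d - 1 by omega
      rw [hRK0]; ring
    have hnextP : (∏ j, (Polynomial.X - Polynomial.C (c j))^((P j).card + 1)).nextCoeff
        = ∑ j, -((((P j).card + 1 : ℕ) : K) * c j) := by
      rw [Polynomial.Monic.nextCoeff_prod _ _ (fun j _ => (monic_X_sub_C _).pow _)]
      refine Finset.sum_congr rfl fun j _ => ?_
      have hpow : (Polynomial.X - Polynomial.C (c j))^((P j).card + 1)
          = ∏ _t ∈ Finset.range ((P j).card + 1), (Polynomial.X - Polynomial.C (c j)) := by
        rw [Finset.prod_const, Finset.card_range]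
      rw [hpow, Polynomial.Monic.nextCoeff_prod _ _ (fun _ _ => monic_X_sub_C _)]
      simp only [Polynomial.nextCoeff_X_sub_C]
      rw [Finset.sum_const, Finset.card_range, nsmul_eq_mul]
      push_cast; ring
    have hzero : ∑ j, -((((P j).card + 1 : ℕ) : K) * c j) = 0 := by
      rw [← hnextP, ← hz]
      exact hnextD
    rw [Finset.sum_neg_distrib, neg_eq_zero] at hzero
    exact hzero
  -- use `main` at two injective tuples to isolate each coefficient
  have hwzero : ∀ j0 : Fin (d-1), (((P j0).card + 1 : ℕ) : K) = 0 := by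
    intro j0
    set e := Infinite.natEmbedding K with he
    have hinj1 : Function.Injective fun j : Fin (d-1) => (e (j : ℕ) : K) := by
      intro a b h
      exact Fin.val_injective (e.injective h)
    have hinj2 : Function.Injective
        fun j : Fin (d-1) => (if j = j0 then (e d : K) else e (j : ℕ)) := by
      intro a b h
      have h' : (if a = j0 then (e d : K) else e (a : ℕ))
          = (if b = j0 then (e d : K) else e (b : ℕ)) := h
      by_cases ha : a = j0 <;> by_cases hb : b = j0
      · rw [ha, hb]
      · exfalso
        rw [if_pos ha, if_neg hb] at h'
        have := e.injective h'
        have := b.is_lt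
        omega
      · exfalso
        rw [if_neg ha, if_pos hb] at h'
        have := e.injective h'
        have := a.is_lt
        omega
      · rw [if_neg ha, if_neg hb] at h'
        exact Fin.val_injective (e.injective h')
    have h1 := main _ hinj1
    have h2 := main _ hinj2
    have h3 : ∑ j, ((((P j).card + 1 : ℕ) : K) * (e (j : ℕ) : K)
        - (((P j).card + 1 : ℕ) : K) * (if j = j0 then (e d : K) else e (j : ℕ))) = 0 := by
      rw [Finset.sum_sub_distrib, h1, h2, sub_zero]
    rw [Finset.sum_eq_single_of_mem j0 (Finset.mem_univ j0)
      (fun j _ hne => by rw [if_neg hne, sub_self])] at h3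
    rw [if_pos rfl, ← mul_sub] at h3
    rcases mul_eq_zero.mp h3 with h | h
    · exact h
    · exfalso
      have hj : ((j0 : ℕ)) = d := e.injective (sub_eq_zero.mp h)
      have := j0.is_lt
      omega
  -- conclude
  have hN : ((k + d : ℕ) : K) = 0 := by
    have hcast : ((k + d : ℕ) : K) = ∑ j, (((P j).card + 1 : ℕ) : K) := by
      rw [← Nat.cast_sum]
      congr 1
      rw [Finset.sum_add_distrib, hcard, Finset.sum_const, Finset.card_univ, Fintype.card_fin,
        smul_eq_mul, mul_one]
      omega
    rw [hcast]
    exact Finset.sum_eq_zero fun j _ => hwzero j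
  haveI : CharP K (ringChar F) :=
    charP_of_injective_algebraMap (algebraMap F K).injective (ringChar F)
  exact (CharP.cast_eq_zero_iff K (ringChar F) (k+d)).mp hN
end

section
/- Let k and d be positive integers with k > d, let p := char(𝔽_q) satisfy p > d+1, assume q > k+d and that p divides k+d. Then the word generated by the monomial T^{k+d} is not a deep hole of the standard Reed–Solomon code of dimension k over 𝔽_q: there exists h ∈ 𝔽_q[T] with deg h ≤ k−1 such that the Hamming distance between the words (x^{k+d})_{x∈𝔽_q^*} and (h(x))_{x∈𝔽_q^*} is strictly less than q−1−k. -/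
open Polynomial Finset

private lemma aux_deg14 {F : Type*} [Field F] (p : ℕ) (hp : 2 ≤ p) (s : Finset F) :
    ((∏ c ∈ s, ((X : F[X]) ^ p - X - C c)) - X ^ (p * s.card)).natDegree
      ≤ p * s.card + 1 - p := by
  classical
  induction s using Finset.induction_on with
  | empty => simp
  | @insert c s hc ih =>
    rw [Finset.prod_insert hc, Finset.card_insert_of_notMem hc]
    set Q : F[X] := ∏ x ∈ s, ((X : F[X]) ^ p - X - C x) with hQ
    have hQd : Q.natDegree ≤ p * s.card := by
      have h1 : Q = (Q - X ^ (p * s.card)) + X ^ (p * s.card) := by ring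
      rw [h1]
      refine (natDegree_add_le _ _).trans ?_
      rw [natDegree_X_pow]
      refine max_le (ih.trans ?_) le_rfl
      generalize p * s.card = e
      omega
    by_cases h0 : s.card = 0
    · have hs : s = ∅ := Finset.card_eq_zero.mp h0
      subst hs
      simp only [hQ, Finset.prod_empty, mul_one, Finset.card_empty]
      have hkey : ((X : F[X]) ^ p - X - C c) - X ^ (p * (0 + 1)) = -(X + C c) := by
        rw [zero_add, mul_one]
        ring
      rw [hkey, natDegree_neg, natDegree_X_add_C]
      omega
    · have hle : p ≤ p * s.card := by
        calc p = p * 1 := (mul_one p).symm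
        _ ≤ p * s.card := Nat.mul_le_mul_left p (Nat.one_le_iff_ne_zero.mpr h0)
      have key : ((X : F[X]) ^ p - X - C c) * Q - X ^ (p * (s.card + 1))
          = X ^ p * (Q - X ^ (p * s.card)) + (-X - C c) * Q := by
        rw [Nat.mul_succ, pow_add]
        ring
      rw [key]
      refine (natDegree_add_le _ _).trans (max_le ?_ ?_)
      · refine natDegree_mul_le.trans ?_
        rw [natDegree_X_pow, Nat.mul_succ]
        generalize p * s.card = e at ih hle ⊢
        omega
      · refine natDegree_mul_le.trans ?_
        have h1 : ((-X : F[X]) - C c).natDegree ≤ 1 := by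
          refine (natDegree_sub_le _ _).trans ?_
          simp [natDegree_neg]
        rw [Nat.mul_succ]
        generalize p * s.card = e at hQd hle ⊢
        omega

theorem stmt14 {F : Type*} [Field F] [Fintype F] [DecidableEq F]
    (q k d : ℕ) (hq : Fintype.card F = q)
    (hd : 1 ≤ d) (hdk : d < k)
    (hp : d + 1 < ringChar F)
    (hqkd : k + d < q)
    (hdvd : ringChar F ∣ (k + d)) :
    ∃ h : Polynomial F, h.degree < k ∧
      hammingDist (fun x : Fˣ => (x : F) ^ (k + d))
        (fun x : Fˣ => h.eval (x : F)) < q - 1 - k := by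
  classical
  set p := ringChar F with hpdef
  haveI hCharP : CharP F p := ringChar.charP F
  have hprime : p.Prime := CharP.char_is_prime F p
  haveI : Fact p.Prime := ⟨hprime⟩
  have hp2 : 2 ≤ p := hprime.two_le
  obtain ⟨m, hm⟩ := hdvd
  have hm1 : 1 ≤ m := by
    rcases Nat.eq_zero_or_pos m with h | h
    · subst h
      rw [mul_zero] at hm
      omega
    · exact h
  have hpq : p ∣ q := by
    obtain ⟨n, hn1, hn2⟩ := FiniteField.card F p
    rw [hq] at hn2
    rw [hn2]
    exact dvd_pow_self p n.ne_zero
  have hpkd : p ≤ k + d := by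
    rw [hm]
    calc p = p * 1 := (mul_one p).symm
    _ ≤ p * m := Nat.mul_le_mul_left p hm1
  have hkdpq : k + d + p ≤ q := by
    have hds : p ∣ q - (k + d) := Nat.dvd_sub hpq ⟨m, hm⟩
    have hpos : 0 < q - (k + d) := by omega
    have := Nat.le_of_dvd hpos hds
    omega
  -- the image of x ↦ x^p - x
  set I : Finset F := univ.image (fun x : F => x ^ p - x) with hI
  have hfib : ∀ c : F, (univ.filter fun x : F => x ^ p - x = c).card ≤ p := by
    intro c
    have hsub : (univ.filter fun x : F => x ^ p - x = c).val
        ⊆ ((X : F[X]) ^ p - X - C c).roots := by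
      intro a ha
      rw [Finset.mem_val, Finset.mem_filter] at ha
      have hne : ((X : F[X]) ^ p - X - C c) ≠ 0 := by
        intro hzero
        have hp1 : p ≠ 1 := by omega
        have hp0 : p ≠ 0 := by omega
        have hcoeff : ((X : F[X]) ^ p - X - C c).coeff p = 1 := by
          simp [coeff_sub, coeff_X_pow, coeff_X, coeff_C, hp1, hp0, Ne.symm hp1, Ne.symm hp0]
        rw [hzero] at hcoeff
        simp at hcoeff
      rw [mem_roots hne]
      simp only [IsRoot, eval_sub, eval_pow, eval_X, eval_C]
      rw [← ha.2]
      ring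
    have h1 := card_le_degree_of_subset_roots hsub
    refine h1.trans ?_
    refine (natDegree_sub_le _ _).trans (max_le ((natDegree_sub_le _ _).trans (max_le ?_ ?_)) ?_)
    · simp [natDegree_X_pow]
    · simp [natDegree_X]
      omega
    · simp [natDegree_C]
  have hIcard : m + 1 ≤ I.card := by
    have h1 : (univ : Finset F).card
        = ∑ c ∈ I, (univ.filter fun x : F => x ^ p - x = c).card :=
      Finset.card_eq_sum_card_fiberwise
        (fun x _ => Finset.mem_image_of_mem _ (Finset.mem_univ x))
    have hqle : q ≤ I.card * p := by
      calc q = (univ : Finset F).card := by rw [Finset.card_univ, hq]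
      _ = ∑ c ∈ I, (univ.filter fun x : F => x ^ p - x = c).card := h1
      _ ≤ I.card * p := by
          have := Finset.sum_le_card_nsmul I
            (fun c => (univ.filter fun x : F => x ^ p - x = c).card) p
            (fun c _ => hfib c)
          simpa [smul_eq_mul] using this
    have h2 : (m + 1) * p ≤ q := by
      have h3 : (m + 1) * p = k + d + p := by
        rw [Nat.succ_mul, mul_comm m p, ← hm]
      rw [h3]
      exact hkdpq
    exact Nat.le_of_mul_le_mul_right (h2.trans hqle) (by omega)
  have h0I : (0 : F) ∈ I := by
    rw [hI]
    refine Finset.mem_image.mpr ⟨0, Finset.mem_univ 0, ?_⟩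
    simp [zero_pow (by omega : p ≠ 0)]
  obtain ⟨cs, hcsI, hcscard⟩ : ∃ cs ⊆ I.erase 0, cs.card = m :=
    Finset.exists_subset_card_eq (by rw [Finset.card_erase_of_mem h0I]; omega)
  have hcs0 : ∀ c ∈ cs, c ≠ 0 := fun c hc => (Finset.mem_erase.mp (hcsI hc)).1
  have hex : ∀ c ∈ cs, ∃ x : F, x ^ p - x = c := by
    intro c hc
    have := (Finset.erase_subset 0 I) (hcsI hc)
    rw [hI, Finset.mem_image] at this
    obtain ⟨x, _, hx⟩ := this
    exact ⟨x, hx⟩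
  set t : F → F := fun c => if h : ∃ x : F, x ^ p - x = c then h.choose else 0 with htdef
  have ht : ∀ c ∈ cs, (t c) ^ p - t c = c := by
    intro c hc
    have h' := hex c hc
    simp only [htdef, dif_pos h']
    exact h'.choose_spec
  set P : F[X] := ∏ c ∈ cs, ((X : F[X]) ^ p - X - C c) with hP
  refine ⟨X ^ (k + d) - P, ?_, ?_⟩
  · -- degree bound
    have hnd := aux_deg14 p hp2 cs
    rw [hcscard, ← hm, ← hP] at hnd
    have hnd2 : ((X : F[X]) ^ (k + d) - P).natDegree ≤ k + d + 1 - p := by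
      have hh : (X : F[X]) ^ (k + d) - P = -(P - X ^ (k + d)) := by ring
      rw [hh, natDegree_neg]
      exact hnd
    have hlt : ((X : F[X]) ^ (k + d) - P).natDegree < k := by omega
    exact lt_of_le_of_lt degree_le_natDegree (by exact_mod_cast hlt)
  · -- hamming distance bound
    have hnat : ∀ i : ℕ, ((i : F)) ^ p = (i : F) := by
      intro i
      have := map_natCast (frobenius F p) i
      rwa [frobenius_def] at this
    have hphi_add : ∀ (a : F) (i : ℕ), (a + (i : F)) ^ p - (a + (i : F)) = a ^ p - a := by
      intro a i
      rw [add_pow_char, hnat]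
      ring
    set U' : Finset F := univ.filter (fun a : F => a ≠ 0 ∧ P.eval a = 0) with hU'
    have hmaps : ∀ z ∈ cs ×ˢ Finset.range p, (t z.1 + (z.2 : F)) ∈ U' := by
      rintro ⟨c, i⟩ hz
      rw [Finset.mem_product] at hz
      obtain ⟨hc, hi⟩ := hz
      have hphi : (t c + (i : F)) ^ p - (t c + (i : F)) = c := by
        rw [hphi_add]
        exact ht c hc
      rw [hU', Finset.mem_filter]
      refine ⟨Finset.mem_univ _, ?_, ?_⟩
      · intro hzero
        rw [hzero] at hphi
        rw [zero_pow (by omega : p ≠ 0), sub_zero] at hphi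
        exact hcs0 c hc hphi.symm
      · rw [hP, eval_prod]
        refine Finset.prod_eq_zero hc ?_
        simp only [eval_sub, eval_pow, eval_X, eval_C]
        rw [hphi]
        ring
    have hinj : Set.InjOn (fun z : F × ℕ => t z.1 + (z.2 : F))
        ↑(cs ×ˢ Finset.range p) := by
      rintro ⟨c, i⟩ hz ⟨c', i'⟩ hz' heq
      rw [Finset.mem_coe, Finset.mem_product, Finset.mem_range] at hz hz'
      simp only at heq
      have hcc : c = c' := by
        have h1 : (t c + (i : F)) ^ p - (t c + (i : F)) = c := by
          rw [hphi_add]; exact ht c hz.1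
        have h2 : (t c' + (i' : F)) ^ p - (t c' + (i' : F)) = c' := by
          rw [hphi_add]; exact ht c' hz'.1
        rw [← h1, ← h2, heq]
      subst hcc
      have hii : (i : F) = (i' : F) := by
        exact add_left_cancel heq
      have := CharP.natCast_injOn_Iio F p hz.2 hz'.2 hii
      simp only [Prod.mk.injEq]
      exact ⟨trivial, this⟩
    have hU'card : k + d ≤ U'.card := by
      have := Finset.card_le_card_of_injOn _ hmaps hinj
      rw [Finset.card_product, hcscard, Finset.card_range] at this
      have hmp : m * p = k + d := by rw [hm, mul_comm]
      rwa [hmp] at this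
    set U'' : Finset Fˣ := univ.filter (fun x : Fˣ => (x : F) ∈ U') with hU''
    have hU''card : U'.card ≤ U''.card := by
      refine Finset.card_le_card_of_injOn
        (fun a : F => if ha : a = 0 then 1 else Units.mk0 a ha) ?_ ?_
      · intro a ha
        rw [Finset.mem_coe, hU', Finset.mem_filter] at ha
        rw [Finset.mem_coe, hU'', Finset.mem_filter]
        refine ⟨Finset.mem_univ _, ?_⟩
        show ((if h : a = 0 then (1 : Fˣ) else Units.mk0 a h : Fˣ) : F) ∈ U'
        rw [dif_neg ha.2.1]
        simp only [Units.val_mk0]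
        rw [hU', Finset.mem_filter]
        exact ha
      · intro a ha b hb hab
        rw [Finset.mem_coe, hU', Finset.mem_filter] at ha hb
        simp only [dif_neg ha.2.1, dif_neg hb.2.1] at hab
        have := congrArg Units.val hab
        simpa using this
    unfold hammingDist
    have hsub : (univ.filter fun x : Fˣ =>
        (x : F) ^ (k + d) ≠ ((X : F[X]) ^ (k + d) - P).eval (x : F))
        ⊆ univ \ U'' := by
      intro x hx
      rw [Finset.mem_filter] at hx
      rw [Finset.mem_sdiff]
      refine ⟨Finset.mem_univ _, ?_⟩
      intro hxU
      apply hx.2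
      rw [hU'', Finset.mem_filter, hU', Finset.mem_filter] at hxU
      simp only [eval_sub, eval_pow, eval_X, hxU.2.2.2, sub_zero]
    have hcard2 : (univ \ U'').card = (q - 1) - U''.card := by
      rw [Finset.card_sdiff_of_subset (Finset.subset_univ _), Finset.card_univ,
        Fintype.card_units, hq]
    have hle := Finset.card_le_card hsub
    rw [hcard2] at hle
    refine lt_of_le_of_lt (le_trans (le_of_eq ?_) hle) ?_
    · congr 1
    · omega
end
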